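/- Characterization of cartesian lenses on morphisms (Proposition 37, morphism clause). Let C be a category with chosen finite products, regarded as a symmetric monoidal category with tensor the binary product ⨯ and unit the terminal object. For all objects A, B, X, Y of C, the map sending a pair (f : A ⟶ X, g : A ⨯ Y ⟶ B) to the class of (A, ⟨id_A, f⟩ : A ⟶ A ⨯ X, g : A ⨯ Y ⟶ B) is a bijection between Hom(A,X) × Hom(A ⨯ Y, B) and the set of monoidal lenses LC((A,B);(X,Y)). -/

import Mathlib

/-!
Characterization of cartesian lenses on morphisms.
-/

open CategoryTheory CategoryTheory.Limits

universe v u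

variable {C : Type u} [Category.{v} C] [HasFiniteProducts C]

/-- A representative of a cartesian monoidal lens from `(A,B)` to `(X,Y)`. -/
structure LensRep (A B X Y : C) where
  M : C
  f : A ⟶ M ⨯ X
  g : M ⨯ Y ⟶ B

/-- Dinaturality in the residual. -/
inductive LensRel (A B X Y : C) : LensRep A B X Y → LensRep A B X Y → Prop
  | dinat {M M' : C} (m : M ⟶ M') (f : A ⟶ M ⨯ X) (g' : M' ⨯ Y ⟶ B) :
      LensRel A B X Y ⟨M', f ≫ prod.map m (𝟙 X), g'⟩ ⟨M, f, prod.map m (𝟙 Y) ≫ g'⟩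

/-- Cartesian monoidal lenses. -/
abbrev LC (A B X Y : C) : Type max u v := Quot (LensRel A B X Y)

/-- Over a category with chosen finite products, the map sending a pair
`(f : A ⟶ X, g : A ⨯ Y ⟶ B)` to the lens with residual `A`, forward part
`⟨id_A, f⟩` and backward part `g`, is a bijection onto the set of monoidal
lenses from `(A,B)` to `(X,Y)`. -/
theorem cartesian_lenses_hom (C : Type u) [Category.{v} C] [HasFiniteProducts C]
    (A B X Y : C) :
    Function.Bijective
      (fun p : (A ⟶ X) × (A ⨯ Y ⟶ B) =>
        (Quot.mk _ ⟨A, prod.lift (𝟙 A) p.1, p.2⟩ : LC A B X Y)) := by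
  have hinv : ∃ inv : LC A B X Y → (A ⟶ X) × (A ⨯ Y ⟶ B),
      ∀ r : LensRep A B X Y,
        inv (Quot.mk _ r) = (r.f ≫ prod.snd, prod.map (r.f ≫ prod.fst) (𝟙 Y) ≫ r.g) := by
    refine ⟨Quot.lift
      (fun r : LensRep A B X Y =>
        (r.f ≫ prod.snd, prod.map (r.f ≫ prod.fst) (𝟙 Y) ≫ r.g)) ?_, fun r => rfl⟩
    rintro _ _ ⟨m, f, g'⟩
    dsimp only
    congr 1
    · simp
    · rw [← Category.assoc]
      congr 1
      ext <;> simp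
  obtain ⟨inv, hinv⟩ := hinv
  rw [Function.bijective_iff_has_inverse]
  refine ⟨inv, fun p => ?_, ?_⟩
  · rw [hinv]
    ext
    · exact prod.lift_snd _ _
    · rw [prod.lift_fst, prod.map_id_id, Category.id_comp]
  · intro q
    induction q using Quot.ind with
    | _ r =>
      rw [hinv]
      dsimp only
      have key : LensRel A B X Y
          ⟨r.M, prod.lift (𝟙 A) (r.f ≫ prod.snd) ≫ prod.map (r.f ≫ prod.fst) (𝟙 X), r.g⟩
          ⟨A, prod.lift (𝟙 A) (r.f ≫ prod.snd),
            prod.map (r.f ≫ prod.fst) (𝟙 Y) ≫ r.g⟩ :=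
        LensRel.dinat (r.f ≫ prod.fst) (prod.lift (𝟙 A) (r.f ≫ prod.snd)) r.g
      have h1 : prod.lift (𝟙 A) (r.f ≫ prod.snd) ≫ prod.map (r.f ≫ prod.fst) (𝟙 X) = r.f := by
        ext
        · simp; exact prod.lift_fst _ _
        · simp; exact prod.lift_snd _ _
      have := Quot.sound key
      rw [h1] at this
      rw [← this]
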